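/- arXiv:1610.09136 — 2 statements merged into one kernel-verified Lean document; each statement's English description precedes it below -/
import Mathlib

section
/- (Uniqueness of solutions after index d.) Let f(z) = Σ_{k≥0} f_k z^k and g(z) = Σ_{k≥0} g_k z^k be two formal power series solutions of the same Mahler equation p_{-1}(z) + p_0(z)f(z) + p_1(z)f(z^q) + ... + p_n(z)f(z^{q^n}) = 0 with p_0 ≠ 0. Let ν_i be the z-adic valuation of p_i for 0 ≤ i ≤ n (with ν_i = +∞ if p_i = 0), and set d = max over 1 ≤ i ≤ n with p_i ≠ 0 of ⌊(ν_0 − ν_i)/(q^i − 1)⌋ (d = −∞ if all p_i = 0 for i ≥ 1). If f_k = g_k for all 0 ≤ k ≤ d (vacuously if d < 0), then f = g. -/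
open Polynomial PowerSeries

/-- Substitution `z ↦ z^m` in a formal power series. -/
noncomputable def psExpand (K : Type*) [Field K] (m : ℕ) (f : PowerSeries K) : PowerSeries K :=
  PowerSeries.mk fun k => if m ∣ k then PowerSeries.coeff (k / m) f else 0

/-- `K(z)` acts on Laurent series via the Laurent expansion at the origin. -/
noncomputable instance {K : Type*} [Field K] : Algebra (RatFunc K) (LaurentSeries K) :=
  RingHom.toAlgebra
    (IsFractionRing.lift (FaithfulSMul.algebraMap_injective K[X] (LaurentSeries K)))

lemma psExpand_coeff {K : Type*} [Field K] (m : ℕ) (f : PowerSeries K) (k : ℕ) :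
    PowerSeries.coeff k (psExpand K m f) =
      if m ∣ k then PowerSeries.coeff (k / m) f else 0 := by
  simp [psExpand]

lemma psExpand_sub {K : Type*} [Field K] (m : ℕ) (f g : PowerSeries K) :
    psExpand K m (f - g) = psExpand K m f - psExpand K m g := by
  ext k
  simp only [psExpand_coeff, map_sub]
  split <;> simp

lemma psExpand_one {K : Type*} [Field K] (f : PowerSeries K) : psExpand K 1 f = f := by
  ext k
  simp [psExpand_coeff]

open scoped Classical in
/-- two power series solutions of the same Mahler equation (with `p 0 ≠ 0`) agreeing
on all coefficients of index `≤ d`, where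
`d = max_{1 ≤ i ≤ n, p_i ≠ 0} ⌊(ν₀ - ν_i)/(q^i - 1)⌋ ∈ {-∞} ∪ ℤ`, are equal. -/
theorem mahler_solution_unique_after_critical_index {K : Type*} [Field K] [CharZero K]
    (q n : ℕ) (hq : 2 ≤ q)
    (pneg : K[X]) (p : Fin (n + 1) → K[X]) (hp0 : p 0 ≠ 0)
    (f g : PowerSeries K)
    (hf : (pneg : PowerSeries K) +
      ∑ i : Fin (n + 1), (p i : PowerSeries K) * psExpand K (q ^ (i : ℕ)) f = 0)
    (hg : (pneg : PowerSeries K) +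
      ∑ i : Fin (n + 1), (p i : PowerSeries K) * psExpand K (q ^ (i : ℕ)) g = 0)
    (d : WithBot ℤ)
    (hd : d = Finset.univ.sup fun i : Fin (n + 1) =>
      if i ≠ 0 ∧ p i ≠ 0 then
        ((Int.fdiv (((p 0).natTrailingDegree : ℤ) - ((p i).natTrailingDegree : ℤ))
          ((q : ℤ) ^ (i : ℕ) - 1) : ℤ) : WithBot ℤ)
      else ⊥)
    (hcoeff : ∀ k : ℕ, ((k : ℤ) : WithBot ℤ) ≤ d → PowerSeries.coeff k f = PowerSeries.coeff k g) :
    f = g := by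
  by_contra hfg
  set h : PowerSeries K := f - g with hh
  have hne : h ≠ 0 := sub_ne_zero.mpr hfg
  -- the homogeneous equation for h
  have heq : ∑ i : Fin (n + 1), (p i : PowerSeries K) * psExpand K (q ^ (i : ℕ)) h = 0 := by
    have := congrArg₂ (· - ·) hf hg
    simp only [sub_zero] at this
    rw [add_sub_add_left_eq_sub, ← Finset.sum_sub_distrib] at this
    rw [← this]
    apply Finset.sum_congr rfl
    intro i _
    rw [hh, psExpand_sub, mul_sub]
  -- least nonzero coefficient of h
  have hex : ∃ k, PowerSeries.coeff k h ≠ 0 := by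
    by_contra hc
    push_neg at hc
    exact hne (PowerSeries.ext fun k => by simp [hc k])
  set k := Nat.find hex with hkdef
  have hk : PowerSeries.coeff k h ≠ 0 := Nat.find_spec hex
  have hmin : ∀ j < k, PowerSeries.coeff j h = 0 := by
    intro j hj
    by_contra hc
    exact absurd (Nat.find_le hc) (not_le.mpr hj)
  -- k > d
  have hdk : d < ((k : ℤ) : WithBot ℤ) := by
    by_contra hc
    push_neg at hc
    exact hk (by rw [hh, map_sub, hcoeff k hc, sub_self])
  -- key inequality for i ≠ 0 with p i ≠ 0
  have hkey : ∀ i : Fin (n + 1), i ≠ 0 → p i ≠ 0 →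
      (p 0).natTrailingDegree + k < (p i).natTrailingDegree + q ^ (i : ℕ) * k := by
    intro i hi0 hpi
    have hle : (((((p 0).natTrailingDegree : ℤ) - ((p i).natTrailingDegree : ℤ)).fdiv
        ((q : ℤ) ^ (i : ℕ) - 1) : ℤ) : WithBot ℤ) ≤ d := by
      rw [hd]
      refine le_trans (le_of_eq ?_) (Finset.le_sup (Finset.mem_univ i))
      exact (if_pos ⟨hi0, hpi⟩).symm
    have hlt : (((((p 0).natTrailingDegree : ℤ) - ((p i).natTrailingDegree : ℤ)).fdiv
        ((q : ℤ) ^ (i : ℕ) - 1) : ℤ) : WithBot ℤ) < ((k : ℤ) : WithBot ℤ) :=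
      lt_of_le_of_lt hle hdk
    rw [WithBot.coe_lt_coe] at hlt
    -- arithmetic
    set a : ℤ := ((p 0).natTrailingDegree : ℤ) - ((p i).natTrailingDegree : ℤ)
    set b : ℤ := (q : ℤ) ^ (i : ℕ) - 1
    have hipos : 1 ≤ (i : ℕ) := by
      rcases Nat.eq_zero_or_pos (i : ℕ) with h0 | h1
      · exact absurd (Fin.ext h0) hi0
      · exact h1
    have hb : 0 < b := by
      have : (2 : ℤ) ≤ (q : ℤ) := by exact_mod_cast hq
      have h2 : (2 : ℤ) ^ (i : ℕ) ≤ (q : ℤ) ^ (i : ℕ) := pow_le_pow_left₀ (by norm_num) this _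
      have h3 : (2 : ℤ) ≤ 2 ^ (i : ℕ) := by
        calc (2 : ℤ) = 2 ^ 1 := by norm_num
        _ ≤ 2 ^ (i : ℕ) := pow_le_pow_right₀ (by norm_num) hipos
      simp only [b]
      omega
    have h1 : a < (a.fdiv b + 1) * b := Int.lt_fdiv_add_one_mul_self a hb
    have h2 : (a.fdiv b + 1) * b ≤ (k : ℤ) * b := by
      apply mul_le_mul_of_nonneg_right _ hb.le
      omega
    have h3 : a < (k : ℤ) * b := lt_of_lt_of_le h1 h2
    have : ((p 0).natTrailingDegree : ℤ) + k < ((p i).natTrailingDegree : ℤ)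
        + (q : ℤ) ^ (i : ℕ) * k := by
      simp only [a, b] at h3
      ring_nf at h3 ⊢
      omega
    exact_mod_cast this
  -- evaluate coefficient N of the equation
  set ν₀ := (p 0).natTrailingDegree with hν₀
  set N := ν₀ + k with hN
  have hsum := congrArg (PowerSeries.coeff N) heq
  rw [map_sum, map_zero] at hsum
  -- terms with i ≠ 0 vanish
  have hterm0 : PowerSeries.coeff N
      ((p 0 : PowerSeries K) * psExpand K (q ^ ((0 : Fin (n+1)) : ℕ)) h) ≠ 0 := by
    have h1 : q ^ ((0 : Fin (n+1)) : ℕ) = 1 := by simp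
    rw [h1, psExpand_one, PowerSeries.coeff_mul]
    rw [Finset.sum_eq_single (ν₀, k)]
    · apply mul_ne_zero
      · rw [Polynomial.coeff_coe]
        exact Polynomial.trailingCoeff_nonzero_iff_nonzero.mpr hp0
      · exact hk
    · rintro ⟨a, b⟩ hab hne'
      rw [Finset.HasAntidiagonal.mem_antidiagonal] at hab
      rcases lt_trichotomy a ν₀ with hlt | heq' | hgt
      · rw [Polynomial.coeff_coe, Polynomial.coeff_eq_zero_of_lt_natTrailingDegree hlt, zero_mul]
      · exfalso; apply hne'; rw [heq'] at hab ⊢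
        simp only [Prod.mk.injEq, true_and]
        omega
      · have : b < k := by omega
        rw [hmin b this, mul_zero]
    · intro hnot
      exact absurd (Finset.HasAntidiagonal.mem_antidiagonal.mpr (by rw [hN])) hnot
  have hterms : ∀ i : Fin (n + 1), i ≠ 0 →
      PowerSeries.coeff N ((p i : PowerSeries K) * psExpand K (q ^ (i : ℕ)) h) = 0 := by
    intro i hi0
    by_cases hpi : p i = 0
    · simp [hpi]
    rw [PowerSeries.coeff_mul]
    apply Finset.sum_eq_zero
    rintro ⟨a, b⟩ hab
    rw [Finset.HasAntidiagonal.mem_antidiagonal] at hab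
    by_cases ha : a < (p i).natTrailingDegree
    · rw [Polynomial.coeff_coe, Polynomial.coeff_eq_zero_of_lt_natTrailingDegree ha, zero_mul]
    push_neg at ha
    rw [psExpand_coeff]
    split_ifs with hdvd
    · rcases hdvd with ⟨c, rfl⟩
      have hqpos : 0 < q ^ (i : ℕ) := Nat.pow_pos (by omega)
      rw [Nat.mul_div_cancel_left c hqpos]
      by_cases hc : c < k
      · rw [hmin c hc, mul_zero]
      · exfalso
        push_neg at hc
        have hbk : q ^ (i : ℕ) * k ≤ q ^ (i : ℕ) * c := Nat.mul_le_mul_left _ hc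
        have := hkey i hi0 hpi
        omega
    · rw [mul_zero]
  -- conclude
  rw [Finset.sum_eq_single_of_mem 0 (Finset.mem_univ _)
    (fun i _ hi => hterms i hi)] at hsum
  exact hterm0 hsum
end

section
/- Let f_1, ..., f_n ∈ K[[z]] span a K(z)-vector space of dimension r, and suppose f_1, ..., f_r are linearly independent over K(z). Suppose the vector (f_1,...,f_n)^T satisfies (f_1,...,f_n)^T(z) = A(z) (f_1,...,f_n)^T(z^q) for some invertible matrix A(z) ∈ GL_n(K(z)). Then there exists an invertible matrix B(z) ∈ GL_r(K(z)) such that (f_1,...,f_r)^T(z) = B(z) (f_1,...,f_r)^T(z^q). -/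
open Polynomial PowerSeries

namespace MahlerAux

variable {K : Type*} [Field K]

/-- Multiplication by `q` as an additive monoid hom `ℤ →+ ℤ`. -/
def qmul (q : ℕ) : ℤ →+ ℤ := AddMonoidHom.mk' (fun a => (q : ℤ) * a) (by intros; ring)

lemma qmul_inj {q : ℕ} (hq : 0 < q) : Function.Injective (qmul q) := by
  intro a b h
  have hq' : (q : ℤ) ≠ 0 := by exact_mod_cast hq.ne'
  exact mul_left_cancel₀ hq' h

lemma qmul_le {q : ℕ} (hq : 0 < q) (a b : ℤ) : qmul q a ≤ qmul q b ↔ a ≤ b := by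
  have hq' : (0 : ℤ) < (q : ℤ) := by exact_mod_cast hq
  simp only [qmul, AddMonoidHom.mk'_apply]
  exact mul_le_mul_iff_of_pos_left hq'

/-- Substitution `z ↦ z^q` on Laurent series, as a ring hom. -/
noncomputable def expandLS (K : Type*) [Field K] (q : ℕ) (hq : 0 < q) :
    LaurentSeries K →+* LaurentSeries K :=
  HahnSeries.embDomainRingHom (qmul q) (qmul_inj hq) (qmul_le hq)

lemma expandLS_single (q : ℕ) (hq : 0 < q) (a : ℤ) (r : K) :
    expandLS K q hq (HahnSeries.single a r) = HahnSeries.single ((q : ℤ) * a) r := by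
  simpa [expandLS, HahnSeries.embDomainRingHom, qmul] using
    (HahnSeries.embDomain_single (f := ⟨⟨qmul q, qmul_inj hq⟩, qmul_le hq _ _⟩)
      (g := a) (r := r))

lemma expandLS_coe_ps (q : ℕ) (hq : 0 < q) (f : PowerSeries K) :
    expandLS K q hq (f : LaurentSeries K) = ((psExpand K q f : PowerSeries K) : LaurentSeries K) := by
  ext n
  have hq' : (0 : ℤ) < (q : ℤ) := by exact_mod_cast hq
  by_cases h : ∃ a : ℤ, (q : ℤ) * a = n
  · obtain ⟨a, rfl⟩ := h
    have hL : (expandLS K q hq (f : LaurentSeries K)).coeff ((q : ℤ) * a)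
        = ((f : LaurentSeries K)).coeff a := by
      exact HahnSeries.embDomain_coeff (f := ⟨⟨qmul q, qmul_inj hq⟩, qmul_le hq _ _⟩)
    rw [hL, PowerSeries.coeff_coe, PowerSeries.coeff_coe]
    rcases lt_or_ge a 0 with ha | ha
    · rw [if_pos ha, if_pos (by nlinarith)]
    · have hna : (0:ℤ) ≤ (q:ℤ) * a := by positivity
      rw [if_neg (not_lt.mpr ha), if_neg (not_lt.mpr hna)]
      simp only [psExpand, PowerSeries.coeff_mk]
      have h1 : ((q : ℤ) * a).natAbs = q * a.natAbs := by
        rw [Int.natAbs_mul]; simp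
      rw [h1, if_pos ⟨a.natAbs, rfl⟩, Nat.mul_div_cancel_left _ hq]
  · have hL : (expandLS K q hq (f : LaurentSeries K)).coeff n = 0 := by
      apply HahnSeries.embDomain_notin_range
      rintro ⟨a, ha⟩
      exact h ⟨a, ha⟩
    rw [hL, PowerSeries.coeff_coe]
    rcases lt_or_ge n 0 with hn | hn
    · rw [if_pos hn]
    · rw [if_neg (not_lt.mpr hn)]
      simp only [psExpand, PowerSeries.coeff_mk]
      rw [if_neg]
      rintro ⟨c, hc⟩
      apply h
      refine ⟨(c : ℤ), ?_⟩
      have : (n.natAbs : ℤ) = (q : ℤ) * c := by exact_mod_cast hc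
      omega


lemma aeval_Xpow_injective {q : ℕ} (hq : 0 < q) :
    Function.Injective (Polynomial.aeval (Polynomial.X ^ q : K[X]) : K[X] →ₐ[K] K[X]) := by
  intro p1 p2 h
  have h0 : (p1 - p2).comp (Polynomial.X ^ q : K[X]) = 0 := by
    rw [sub_comp, comp_eq_aeval, comp_eq_aeval, sub_eq_zero]
    exact h
  rw [comp_eq_zero_iff] at h0
  rcases h0 with h0 | ⟨_, h0⟩
  · exact sub_eq_zero.mp h0
  · exfalso
    have := congrArg natDegree h0
    rw [natDegree_X_pow, natDegree_C] at this
    omega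

/-- Substitution `z ↦ z^q` on rational functions. -/
noncomputable def ratExpand (q : ℕ) (hq : 0 < q) : RatFunc K →+* RatFunc K :=
  IsFractionRing.lift (g := (algebraMap K[X] (RatFunc K)).comp
      (Polynomial.aeval (Polynomial.X ^ q : K[X]) : K[X] →ₐ[K] K[X]).toRingHom)
    ((IsFractionRing.injective K[X] (RatFunc K)).comp (aeval_Xpow_injective hq))

lemma coe_ratExpand (q : ℕ) (hq : 0 < q) (c : RatFunc K) :
    ((ratExpand q hq c : RatFunc K) : LaurentSeries K) = expandLS K q hq (c : LaurentSeries K) := by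
  have key : (algebraMap (RatFunc K) (LaurentSeries K)).comp (ratExpand (K := K) q hq)
      = (expandLS K q hq).comp (algebraMap (RatFunc K) (LaurentSeries K)) := by
    apply IsLocalization.ringHom_ext (nonZeroDivisors K[X])
    apply Polynomial.ringHom_ext
    · intro a
      simp only [RingHom.comp_apply, ratExpand, IsFractionRing.lift_algebraMap,
        RingHom.comp_apply, AlgHom.toRingHom_eq_coe, RingHom.coe_coe, Polynomial.aeval_C,
        Polynomial.algebraMap_eq, AlgHom.toRingHom_eq_coe]
      have h1 : ∀ p : K[X], (algebraMap (RatFunc K) (LaurentSeries K)) ((algebraMap K[X] (RatFunc K)) p)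
          = HahnSeries.ofPowerSeries ℤ K (p : PowerSeries K) := fun p =>
        IsFractionRing.lift_algebraMap _ _
      rw [h1, Polynomial.coe_C, HahnSeries.ofPowerSeries_C]
      exact (HahnSeries.embDomainRingHom_C (f := qmul q) (hfi := qmul_inj hq)
        (hf := qmul_le hq)).symm
    · have h1 : ∀ p : K[X], (algebraMap (RatFunc K) (LaurentSeries K)) ((algebraMap K[X] (RatFunc K)) p)
          = HahnSeries.ofPowerSeries ℤ K (p : PowerSeries K) := fun p =>
        IsFractionRing.lift_algebraMap _ _
      simp only [RingHom.comp_apply, ratExpand, IsFractionRing.lift_algebraMap,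
        RingHom.comp_apply, AlgHom.toRingHom_eq_coe, RingHom.coe_coe, Polynomial.aeval_X]
      rw [h1, h1, Polynomial.coe_pow, Polynomial.coe_X, map_pow, HahnSeries.ofPowerSeries_X,
        HahnSeries.single_pow, expandLS_single]
      simp
  exact DFunLike.congr_fun key c

end MahlerAux

set_option synthInstance.maxHeartbeats 1000000 in
set_option maxHeartbeats 4000000 in
open MahlerAux in
/-- if `f₁, …, fₙ` span a `K(z)`-space of dimension `r`, the first `r` of them are
linearly independent, and `(fᵢ(z))ᵢ = A(z) (fᵢ(z^q))ᵢ` for an invertible `A ∈ GLₙ(K(z))`, then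
there is an invertible `B ∈ GL_r(K(z))` with `(fᵢ(z))_{i ≤ r} = B(z) (fᵢ(z^q))_{i ≤ r}`. -/
theorem mahler_reduced_system {K : Type*} [Field K] [CharZero K]
    (q n r : ℕ) (hq : 2 ≤ q) (hrn : r ≤ n)
    (f : Fin n → PowerSeries K)
    (hrank : Module.rank (RatFunc K) (Submodule.span (RatFunc K)
      (Set.range fun i => (f i : LaurentSeries K))) = r)
    (hind : LinearIndependent (RatFunc K)
      fun i : Fin r => (f (Fin.castLE hrn i) : LaurentSeries K))
    (A : Matrix (Fin n) (Fin n) (RatFunc K)) (hA : IsUnit A.det)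
    (heq : ∀ i, (f i : LaurentSeries K) =
      ∑ j, (A i j : LaurentSeries K) * (psExpand K q (f j) : LaurentSeries K)) :
    ∃ B : Matrix (Fin r) (Fin r) (RatFunc K), IsUnit B.det ∧
      ∀ i : Fin r, (f (Fin.castLE hrn i) : LaurentSeries K) =
        ∑ j : Fin r, (B i j : LaurentSeries K) *
          (psExpand K q (f (Fin.castLE hrn j)) : LaurentSeries K) := by
  classical
  rcases Nat.eq_zero_or_pos r with rfl | hr
  · exact ⟨1, by simp, fun i => i.elim0⟩
  have hq0 : 0 < q := by omega
  set V := Submodule.span (RatFunc K) (Set.range fun i => ((f i : LaurentSeries K))) with hVdef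
  have hmem : ∀ j : Fin n, ((f j : LaurentSeries K)) ∈ V := fun j => Submodule.subset_span ⟨j, rfl⟩
  haveI hfin : Module.Finite (RatFunc K) V := Module.finite_of_rank_eq_nat hrank
  have hfinrank : Module.finrank (RatFunc K) V = r := Module.finrank_eq_of_rank_eq hrank
  set g : Fin r → V := fun i => ⟨_, hmem (Fin.castLE hrn i)⟩ with hgdef
  have hgind : LinearIndependent (RatFunc K) g := by
    apply LinearIndependent.of_comp V.subtype
    exact hind
  haveI : Nonempty (Fin r) := ⟨⟨0, hr⟩⟩
  let b : Module.Basis (Fin r) (RatFunc K) V :=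
    basisOfLinearIndependentOfCardEqFinrank hgind (by simpa using hfinrank.symm)
  have hb : ⇑b = g := coe_basisOfLinearIndependentOfCardEqFinrank hgind _
  set C : Fin n → Fin r → RatFunc K := fun j k => b.repr ⟨_, hmem j⟩ k with hCdef
  have halg : ∀ c : RatFunc K, algebraMap (RatFunc K) (LaurentSeries K) c = (c : LaurentSeries K) :=
    fun _ => rfl
  have hC : ∀ j : Fin n, (f j : LaurentSeries K)
      = ∑ k, (C j k : LaurentSeries K) * (f (Fin.castLE hrn k) : LaurentSeries K) := by
    intro j
    calc (f j : LaurentSeries K) = V.subtype (⟨_, hmem j⟩ : V) := rfl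
      _ = V.subtype (∑ k, b.repr ⟨_, hmem j⟩ k • b k) := by rw [b.sum_repr]
      _ = ∑ k, b.repr ⟨_, hmem j⟩ k • ((b k : V) : LaurentSeries K) := by
          rw [map_sum]
          exact Finset.sum_congr rfl fun k _ => rfl
      _ = ∑ k, (C j k : LaurentSeries K) * (f (Fin.castLE hrn k) : LaurentSeries K) := by
          refine Finset.sum_congr rfl fun k _ => ?_
          rw [hb, Algebra.smul_def, halg]
  have hEps : ∀ (h : PowerSeries K),
      expandLS K q hq0 (h : LaurentSeries K) = (psExpand K q h : LaurentSeries K) :=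
    expandLS_coe_ps q hq0
  set B : Matrix (Fin r) (Fin r) (RatFunc K) :=
    Matrix.of fun i k => ∑ j, A (Fin.castLE hrn i) j * ratExpand q hq0 (C j k) with hBdef
  have coesum : ∀ (s : Finset (Fin n)) (w : Fin n → RatFunc K),
      ((∑ j ∈ s, w j : RatFunc K) : LaurentSeries K) = ∑ j ∈ s, (w j : LaurentSeries K) := by
    intro s w
    simp only [map_sum]
  have key : ∀ i : Fin r, (f (Fin.castLE hrn i) : LaurentSeries K)
      = ∑ k, (B i k : LaurentSeries K) * (psExpand K q (f (Fin.castLE hrn k)) : LaurentSeries K) := by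
    intro i
    rw [heq (Fin.castLE hrn i)]
    have step : ∀ j : Fin n, (psExpand K q (f j) : LaurentSeries K)
        = ∑ k, (ratExpand q hq0 (C j k) : LaurentSeries K) *
            (psExpand K q (f (Fin.castLE hrn k)) : LaurentSeries K) := by
      intro j
      rw [← hEps, hC j, map_sum]
      refine Finset.sum_congr rfl fun k _ => ?_
      rw [map_mul, coe_ratExpand q hq0, hEps]
    calc ∑ j, (A (Fin.castLE hrn i) j : LaurentSeries K) * (psExpand K q (f j) : LaurentSeries K)
        = ∑ j, ∑ k, (A (Fin.castLE hrn i) j : LaurentSeries K) *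
            ((ratExpand q hq0 (C j k) : LaurentSeries K) *
              (psExpand K q (f (Fin.castLE hrn k)) : LaurentSeries K)) := by
          refine Finset.sum_congr rfl fun j _ => ?_
          rw [step j, Finset.mul_sum]
      _ = ∑ k, ∑ j, (A (Fin.castLE hrn i) j : LaurentSeries K) *
            ((ratExpand q hq0 (C j k) : LaurentSeries K) *
              (psExpand K q (f (Fin.castLE hrn k)) : LaurentSeries K)) := by
          rw [Finset.sum_comm]
      _ = ∑ k, (B i k : LaurentSeries K) *
            (psExpand K q (f (Fin.castLE hrn k)) : LaurentSeries K) := by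
          refine Finset.sum_congr rfl fun k _ => ?_
          have hcoe : ((B i k : RatFunc K) : LaurentSeries K)
              = ∑ j, (A (Fin.castLE hrn i) j : LaurentSeries K) *
                  ((ratExpand q hq0 (C j k) : RatFunc K) : LaurentSeries K) := by
            rw [hBdef]
            simp only [Matrix.of_apply, map_sum, map_mul]
          rw [hcoe, Finset.sum_mul]
          simp only [mul_assoc]
  have hdet : B.det ≠ 0 := by
    intro h0
    obtain ⟨v, hv0, hv⟩ := Matrix.exists_vecMul_eq_zero_iff.mpr h0
    apply hv0
    have hsum : ∑ i, v i • (f (Fin.castLE hrn i) : LaurentSeries K) = 0 := by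
      calc ∑ i, v i • (f (Fin.castLE hrn i) : LaurentSeries K)
          = ∑ i, ∑ k, (v i : LaurentSeries K) * ((B i k : LaurentSeries K) *
              (psExpand K q (f (Fin.castLE hrn k)) : LaurentSeries K)) := by
            refine Finset.sum_congr rfl fun i _ => ?_
            rw [Algebra.smul_def, halg, key i, Finset.mul_sum]
        _ = ∑ k, ((∑ i, v i * B i k : RatFunc K) : LaurentSeries K) *
              (psExpand K q (f (Fin.castLE hrn k)) : LaurentSeries K) := by
            rw [Finset.sum_comm]
            refine Finset.sum_congr rfl fun k _ => ?_
            have : ((∑ i, v i * B i k : RatFunc K) : LaurentSeries K)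
                = ∑ i, (v i : LaurentSeries K) * (B i k : LaurentSeries K) := by
              simp only [map_sum, map_mul]
            rw [this, Finset.sum_mul]
            simp only [mul_assoc]
        _ = 0 := by
            refine Finset.sum_eq_zero fun k _ => ?_
            have h1 : ∑ i, v i * B i k = 0 := by
              have := congrFun hv k
              simpa [Matrix.vecMul, dotProduct] using this
            rw [h1, map_zero, zero_mul]
    have := Fintype.linearIndependent_iff.mp hind v hsum
    funext i
    exact this i
  exact ⟨B, isUnit_iff_ne_zero.mpr hdet, key⟩
end
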